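/- arXiv:1104.4938 — 7 statements merged into one kernel-verified Lean document; each statement's English description precedes it below -/
import Mathlib

section
/- For all integers n ≥ 1, the inequalities √(2(n+1)) ≤ 2^n · n! / (2n-1)!! ≤ 2√n hold, where (2n-1)!! = 1·3·5⋯(2n-1). -/
open Nat

/-- `(2n-1)!! = 1·3·5⋯(2n-1)`, the product of the first `n` odd positive integers. -/
def oddDF (n : ℕ) : ℕ := ∏ i ∈ Finset.range n, (2 * i + 1)

/-!
Write `r n = 2ⁿ n! / (2n-1)!!`. Then `r (n+1) = r n · (2n+2)/(2n+1)`, so both bounds on `r n ^ 2`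
propagate by induction from `r 1 = 2`: the lower one because `(n+1)(2n+2)² ≥ (n+2)(2n+1)²`,
the upper one because `4n(n+1) ≤ (2n+1)²`.
-/

lemma oddDF_pos (n : ℕ) : 0 < oddDF n :=
  Finset.prod_pos fun i _ => by positivity

lemma oddDF_succ (n : ℕ) : oddDF (n + 1) = oddDF n * (2 * n + 1) :=
  Finset.prod_range_succ _ _

/-- The ratio `(2n)!! / (2n-1)!!`, written with `(2n)!! = 2ⁿ n!`. -/
noncomputable def wallisRatio (n : ℕ) : ℝ := 2 ^ n * n ! / oddDF n

lemma wallisRatio_nonneg (n : ℕ) : 0 ≤ wallisRatio n := by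
  unfold wallisRatio
  positivity

lemma wallisRatio_one : wallisRatio 1 = 2 := by
  simp [wallisRatio, oddDF]

lemma wallisRatio_succ (n : ℕ) :
    wallisRatio (n + 1) = wallisRatio n * (2 * (n + 1) / (2 * n + 1)) := by
  have hD : (0 : ℝ) < oddDF n := mod_cast oddDF_pos n
  unfold wallisRatio
  rw [oddDF_succ]
  push_cast [Nat.factorial_succ]
  field_simp
  ring

lemma wallisRatio_succ_sq (n : ℕ) :
    wallisRatio (n + 1) ^ 2 * (2 * n + 1) ^ 2 = wallisRatio n ^ 2 * (2 * (n + 1)) ^ 2 := by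
  rw [wallisRatio_succ]
  field_simp

lemma two_mul_succ_le_wallisRatio_sq {n : ℕ} (hn : 1 ≤ n) :
    2 * ((n : ℝ) + 1) ≤ wallisRatio n ^ 2 := by
  induction n, hn using Nat.le_induction with
  | base => norm_num [wallisRatio_one]
  | succ n _ ih =>
    have key := wallisRatio_succ_sq n
    have hpos : (0 : ℝ) < (2 * n + 1) ^ 2 := by positivity
    push_cast
    refine le_of_mul_le_mul_right ?_ hpos
    rw [key]
    nlinarith [sq_nonneg ((n : ℝ) + 1)]

lemma wallisRatio_sq_le_four_mul {n : ℕ} (hn : 1 ≤ n) :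
    wallisRatio n ^ 2 ≤ 4 * n := by
  induction n, hn using Nat.le_induction with
  | base => norm_num [wallisRatio_one]
  | succ n _ ih =>
    have key := wallisRatio_succ_sq n
    have hpos : (0 : ℝ) < (2 * n + 1) ^ 2 := by positivity
    push_cast
    refine le_of_mul_le_mul_right ?_ hpos
    rw [key]
    nlinarith [sq_nonneg (n : ℝ)]

theorem stmt0 (n : ℕ) (hn : 1 ≤ n) :
    Real.sqrt (2 * (n + 1)) ≤ (2 : ℝ) ^ n * (n ! : ℝ) / (oddDF n : ℝ) ∧
      (2 : ℝ) ^ n * (n ! : ℝ) / (oddDF n : ℝ) ≤ 2 * Real.sqrt n := by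
  change √(2 * (n + 1)) ≤ wallisRatio n ∧ wallisRatio n ≤ 2 * √n
  have hr := wallisRatio_nonneg n
  constructor
  · exact Real.sqrt_le_iff.2 ⟨hr, two_mul_succ_le_wallisRatio_sq hn⟩
  · refine (pow_le_pow_iff_left₀ hr (by positivity) two_ne_zero).1 ?_
    rw [mul_pow, Real.sq_sqrt n.cast_nonneg]
    linarith [wallisRatio_sq_le_four_mul hn]
end

section
/- For all integers n > 1, the identity ∑_{k=1}^{n} C(n-1, k-1) · (2n-2k-1)!! · (2k-2)!! = (2n-1)!! holds. -/
open Nat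

/-- `(2n)!! = 2·4⋯(2n)`, the product of the first `n` even positive integers. -/
def evenDF (n : ℕ) : ℕ := ∏ i ∈ Finset.range n, (2 * i + 2)

lemma evenDF_succ (n : ℕ) : evenDF (n + 1) = evenDF n * (2 * n + 2) :=
  Finset.prod_range_succ _ n

lemma evenDF_eq_two_pow_mul_factorial (n : ℕ) : evenDF n = 2 ^ n * n ! := by
  induction n with
  | zero => rfl
  | succ n ih => rw [evenDF_succ, ih, pow_succ, factorial_succ]; ring

lemma oddDF_mul_two_pow (n : ℕ) : oddDF n * 2 ^ n = n.centralBinom * n ! := by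
  induction n with
  | zero => rfl
  | succ n ih =>
    calc oddDF (n + 1) * 2 ^ (n + 1) = 2 * (2 * n + 1) * (oddDF n * 2 ^ n) := by
          rw [oddDF_succ, pow_succ]; ring
      _ = (n + 1) * (n + 1).centralBinom * n ! := by
          rw [ih, ← mul_assoc, succ_mul_centralBinom_succ]
      _ = (n + 1).centralBinom * (n + 1)! := by rw [factorial_succ]; ring

lemma sum_four_pow_mul_centralBinom (m : ℕ) :
    ∑ k ∈ Finset.range (m + 1), 4 ^ k * (m - k).centralBinom =
      (2 * m + 1) * m.centralBinom := by
  induction m with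
  | zero => simp
  | succ m ih =>
    have h := succ_mul_centralBinom_succ m
    rw [Finset.sum_range_succ', Nat.sub_zero, pow_zero, one_mul]
    have hshift : ∀ k ∈ Finset.range (m + 1),
        4 ^ (k + 1) * (m + 1 - (k + 1)).centralBinom = 4 * (4 ^ k * (m - k).centralBinom) := by
      intro k _
      rw [Nat.add_sub_add_right, pow_succ]; ring
    rw [Finset.sum_congr rfl hshift, ← Finset.mul_sum, ih]
    linarith

lemma choose_mul_oddDF_mul_evenDF_mul_two_pow {m k : ℕ} (hk : k ≤ m) :
    m.choose k * oddDF (m - k) * evenDF k * 2 ^ m = m ! * (4 ^ k * (m - k).centralBinom) := by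
  have hpow : 2 ^ m = 2 ^ (m - k) * 2 ^ k := by rw [← pow_add, Nat.sub_add_cancel hk]
  calc m.choose k * oddDF (m - k) * evenDF k * 2 ^ m
        = m.choose k * (oddDF (m - k) * 2 ^ (m - k)) * k ! * (2 ^ k * 2 ^ k) := by
          rw [hpow, evenDF_eq_two_pow_mul_factorial]; ring
    _ = m.choose k * k ! * (m - k)! * ((2 * 2) ^ k * (m - k).centralBinom) := by
          rw [oddDF_mul_two_pow, mul_pow]; ring
    _ = m ! * (4 ^ k * (m - k).centralBinom) := by
          rw [choose_mul_factorial_mul_factorial hk]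

theorem sum_choose_mul_oddDF_mul_evenDF (m : ℕ) :
    ∑ k ∈ Finset.range (m + 1), m.choose k * oddDF (m - k) * evenDF k = oddDF (m + 1) := by
  refine Nat.eq_of_mul_eq_mul_right (pow_pos two_pos m) ?_
  calc (∑ k ∈ Finset.range (m + 1), m.choose k * oddDF (m - k) * evenDF k) * 2 ^ m
        = m ! * ∑ k ∈ Finset.range (m + 1), 4 ^ k * (m - k).centralBinom := by
          rw [Finset.sum_mul, Finset.mul_sum]
          exact Finset.sum_congr rfl fun k hk =>
            choose_mul_oddDF_mul_evenDF_mul_two_pow (Finset.mem_range_succ_iff.mp hk)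
    _ = oddDF m * 2 ^ m * (2 * m + 1) := by
          rw [sum_four_pow_mul_centralBinom, oddDF_mul_two_pow]; ring
    _ = oddDF (m + 1) * 2 ^ m := by rw [oddDF_succ]; ring

theorem stmt1 (n : ℕ) (hn : 1 < n) :
    ∑ k ∈ Finset.Icc 1 n, (n - 1).choose (k - 1) * oddDF (n - k) * evenDF (k - 1) =
      oddDF n := by
  obtain ⟨m, rfl⟩ : ∃ m, n = m + 1 := ⟨n - 1, by omega⟩
  rw [← sum_choose_mul_oddDF_mul_evenDF, ← Finset.Ico_add_one_right_eq_Icc,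
    Finset.sum_Ico_eq_sum_range]
  refine Finset.sum_congr (by simp) fun k _ => ?_
  rw [add_comm 1 k, Nat.add_sub_cancel, Nat.add_sub_cancel, Nat.add_sub_add_right]
end

section
/- Define sequences by the formal power series identity ∑_{n≥0} w_n z^n/(n!)² = exp(∑_{n≥1} u_n z^n/(n!)²) where ∑_{n≥0} w_n z^n/(n!)² = (1-z)^{-1/2} e^{z/2}. Then u_1 = 1 and u_n = n!(n-1)!/2 for all n > 1. -/
open Nat PowerSeries

/-- The formal exponential `exp f` of a power series `f` with zero constant term,
defined coefficient-wise: the coefficient of `z^n` in `exp f = ∑_k f^k/k!` is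
`∑_{k=0}^{n} (coeff of z^n in f^k)/k!` (higher powers of `f` do not contribute). -/
noncomputable def expComp (f : PowerSeries ℚ) : PowerSeries ℚ :=
  PowerSeries.mk fun n =>
    ∑ k ∈ Finset.range (n + 1), (PowerSeries.coeff (R := ℚ) n (f ^ k)) / (k ! : ℚ)

/-!
The factors `A = ∑ C(2k,k) zᵏ/4ᵏ = (1-z)^(-1/2)` and `B = e^(z/2)` satisfy `2(1-z)A' = A`
and `2B' = B`, so `W = AB` satisfies `2(1-z)W' = (2-z)W`. On the other hand `W = exp U`
gives `W' = U'W`. Cancelling `W` yields `2(1-z)U' = 2-z`, i.e. `U' = 1 + z/2 + z²/2 + ⋯`,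
and `[zⁿ]U' = u_{n+1}/((n+1)! n!)`.
-/

section

open Finset

lemma coeff_pow_eq_zero_of_lt {R : Type*} [CommSemiring R] {f : R⟦X⟧}
    (hf : constantCoeff f = 0) {n k : ℕ} (h : n < k) : coeff n (f ^ k) = 0 := by
  obtain ⟨g, rfl⟩ := X_dvd_iff.2 hf
  rw [mul_pow, mul_comm, coeff_mul_X_pow', if_neg (not_le.2 h)]

lemma coeff_expComp_eq_sum {f : ℚ⟦X⟧} (hf : constantCoeff f = 0) {n N : ℕ} (h : n ≤ N) :
    coeff n (expComp f) = ∑ k ∈ range (N + 1), coeff n (f ^ k) / (k ! : ℚ) := by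
  rw [expComp, coeff_mk]
  refine sum_subset (range_subset_range.2 (by omega)) fun k hkN hkn => ?_
  rw [coeff_pow_eq_zero_of_lt hf (by simp only [mem_range] at hkN hkn; omega), zero_div]

lemma coeff_succ_pow_succ_div_factorial (f : ℚ⟦X⟧) (n k : ℕ) :
    coeff (n + 1) (f ^ (k + 1)) / ((k + 1)! : ℚ) * (n + 1) =
      coeff n (d⁄dX ℚ f * f ^ k) / (k ! : ℚ) := by
  have hd : coeff (n + 1) (f ^ (k + 1)) * (n + 1) = (k + 1) * coeff n (d⁄dX ℚ f * f ^ k) := by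
    rw [← coeff_derivative, derivative_pow, add_tsub_cancel_right, mul_assoc, mul_comm (f ^ k),
      ← map_natCast (C (R := ℚ)), coeff_C_mul, cast_succ]
  rw [factorial_succ, cast_mul, div_mul_eq_mul_div, hd]
  push_cast
  field_simp

lemma derivative_expComp {f : ℚ⟦X⟧} (hf : constantCoeff f = 0) :
    d⁄dX ℚ (expComp f) = d⁄dX ℚ f * expComp f := by
  ext n
  have hE : ∀ p ∈ antidiagonal n, coeff p.2 (expComp f) =
      ∑ k ∈ range (n + 1), coeff p.2 (f ^ k) / (k ! : ℚ) := fun p hp =>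
    coeff_expComp_eq_sum hf (HasAntidiagonal.antidiagonal.snd_le hp)
  calc coeff n (d⁄dX ℚ (expComp f))
      = ∑ k ∈ range (n + 1), coeff (n + 1) (f ^ (k + 1)) / ((k + 1)! : ℚ) * (n + 1) := by
        rw [coeff_derivative, coeff_expComp_eq_sum hf le_rfl, sum_range_succ', add_mul, sum_mul]
        simp [coeff_one]
    _ = ∑ k ∈ range (n + 1), coeff n (d⁄dX ℚ f * f ^ k) / (k ! : ℚ) := by
        simp only [coeff_succ_pow_succ_div_factorial]
    _ = coeff n (d⁄dX ℚ f * expComp f) := by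
        symm
        rw [coeff_mul, sum_congr rfl fun p hp => by rw [hE p hp, mul_sum], sum_comm]
        simp only [coeff_mul, sum_div, mul_div_assoc]

end

lemma coeff_two_mul_one_sub_X_mul {R : Type*} [CommRing R] (f : R⟦X⟧) (n : ℕ) :
    coeff (n + 1) (2 * (1 - X) * f) = 2 * (coeff (n + 1) f - coeff n f) := by
  rw [show 2 * (1 - X) * f = f + f - X * (f + f) by ring]
  simp only [map_sub, map_add, coeff_succ_X_mul]
  ring

lemma two_mul_one_sub_X_mul_derivative_mul {R : Type*} [CommRing R] {A B : R⟦X⟧}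
    (hA : 2 * (1 - X) * d⁄dX R A = A) (hB : 2 * d⁄dX R B = B) :
    2 * (1 - X) * d⁄dX R (A * B) = (2 - X) * (A * B) := by
  rw [Derivation.leibniz, smul_eq_mul, smul_eq_mul]
  linear_combination B * hA + (1 - X) * A * hB

noncomputable def centralBinomSeries : ℚ⟦X⟧ := mk fun k => ((2 * k).choose k : ℚ) / 4 ^ k

noncomputable def expHalfSeries : ℚ⟦X⟧ := mk fun n => 1 / (2 ^ n * (n ! : ℚ))

lemma two_mul_one_sub_X_mul_derivative_centralBinomSeries :
    2 * (1 - X) * d⁄dX ℚ centralBinomSeries = centralBinomSeries := by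
  ext n
  cases n with
  | zero =>
    simp only [coeff_zero_eq_constantCoeff, map_mul, map_sub, map_one, constantCoeff_X,
      map_ofNat]
    rw [← coeff_zero_eq_constantCoeff_apply, coeff_derivative]
    norm_num [centralBinomSeries]
  | succ n =>
    rw [coeff_two_mul_one_sub_X_mul]
    simp only [centralBinomSeries, coeff_derivative, coeff_mk]
    have hc : ((n + 1 + 1 : ℕ) : ℚ) * ((2 * (n + 1 + 1)).choose (n + 1 + 1) : ℕ) =
        2 * (2 * (n + 1 : ℕ) + 1) * ((2 * (n + 1)).choose (n + 1) : ℕ) := by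
      exact_mod_cast succ_mul_centralBinom_succ (n + 1)
    push_cast at hc ⊢
    rw [pow_succ _ (n + 1)]
    field_simp
    linear_combination 2 * hc

lemma two_mul_derivative_expHalfSeries : 2 * d⁄dX ℚ expHalfSeries = expHalfSeries := by
  ext n
  simp only [expHalfSeries, two_mul, map_add, coeff_derivative, coeff_mk, factorial_succ]
  push_cast
  field_simp
  ring

lemma two_mul_one_sub_X_mul_mk_one_half :
    2 * (1 - X) * mk (fun n => if n = 0 then (1 : ℚ) else 1 / 2) = 2 - X := by
  ext n
  rcases n with _ | _ | n
  · simp [map_ofNat]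
  · rw [coeff_two_mul_one_sub_X_mul]
    simp only [coeff_mk, ← map_ofNat C, map_sub, coeff_succ_C, coeff_X]
    norm_num
  · rw [coeff_two_mul_one_sub_X_mul]
    simp [coeff_X, ← map_ofNat C]

lemma coeff_derivative_mk_div_factorial_sq (u : ℕ → ℚ) (n : ℕ) :
    coeff n (d⁄dX ℚ (mk fun n => if n = 0 then 0 else u n / (n ! : ℚ) ^ 2)) =
      u (n + 1) / ((n + 1)! * n ! : ℚ) := by
  rw [coeff_derivative, coeff_mk, if_neg n.succ_ne_zero, factorial_succ]
  push_cast
  field_simp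

theorem stmt5 (w u : ℕ → ℚ)
    (hwgf : PowerSeries.mk (fun n => w n / (n ! : ℚ) ^ 2) =
      (PowerSeries.mk fun k => ((2 * k).choose k : ℚ) / 4 ^ k) *
        (PowerSeries.mk fun n => 1 / (2 ^ n * (n ! : ℚ))))
    (hexp : PowerSeries.mk (fun n => w n / (n ! : ℚ) ^ 2) =
      expComp (PowerSeries.mk fun n => if n = 0 then 0 else u n / (n ! : ℚ) ^ 2)) :
    u 1 = 1 ∧ ∀ n : ℕ, 1 < n → u n = (n ! : ℚ) * ((n - 1)! : ℚ) / 2 := by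
  set U := mk fun n => if n = 0 then 0 else u n / (n ! : ℚ) ^ 2
  set W := mk fun n => w n / (n ! : ℚ) ^ 2
  have hW : W = centralBinomSeries * expHalfSeries := hwgf
  have hW0 : W ≠ 0 := hW ▸ ne_zero_of_map (f := constantCoeff)
    (by simp [centralBinomSeries, expHalfSeries])
  have hWode : 2 * (1 - X) * d⁄dX ℚ W = (2 - X) * W := hW ▸
    two_mul_one_sub_X_mul_derivative_mul two_mul_one_sub_X_mul_derivative_centralBinomSeries
      two_mul_derivative_expHalfSeries
  have hWexp : d⁄dX ℚ W = d⁄dX ℚ U * W := hexp ▸ derivative_expComp (by simp [U])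
  have hU : d⁄dX ℚ U = mk fun n => if n = 0 then 1 else 1 / 2 := by
    have h2X : (2 * (1 - X) : ℚ⟦X⟧) ≠ 0 :=
      ne_zero_of_map (f := constantCoeff) (by simp [map_ofNat])
    refine mul_left_cancel₀ h2X (mul_right_cancel₀ hW0 ?_)
    rw [two_mul_one_sub_X_mul_mk_one_half, ← hWode, hWexp]
    ring
  have hu : ∀ n, u (n + 1) = (n + 1)! * n ! * (if n = 0 then 1 else 1 / 2) := fun n => by
    have h := congrArg (coeff n) hU
    rw [coeff_derivative_mk_div_factorial_sq, coeff_mk] at h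
    rw [← h]
    field_simp
  refine ⟨by simpa using hu 0, fun n hn => ?_⟩
  obtain ⟨m, rfl⟩ : ∃ m, n = m + 1 := ⟨n - 1, by omega⟩
  rw [hu m, if_neg (by omega), add_tsub_cancel_right]
  ring
end

section
/- Fix d ≥ 2 and n ≥ 2. Fix the standard fixed-point-free involution t₁ = (1,2)(3,4)⋯(2n-1,2n) on {1,…,2n}. The number of (d-1)-tuples (t₂,…,t_d) of fixed-point-free involutions on {1,…,2n} such that the orbit of the point 1 under the group ⟨t₁,…,t_d⟩ has size 2k equals C(n-1,k-1)·((2n-2k-1)!!)^{d-1}·v_k(d), where v_k(d) is the number of (d-1)-tuples (s₂,…,s_k) of fixed-point-free involutions on a set of size 2k which together with a fixed standard fixed-point-free involution generate a transitive group. -/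
open Nat

/-- The standard fixed-point-free involution `(1,2)(3,4)⋯(2n-1,2n)` on `{0,…,2n-1}`:
it exchanges `2j` and `2j+1` for each `j`. -/
def stdInv (n : ℕ) : Equiv.Perm (Fin (2 * n)) :=
  Function.Involutive.toPerm
    (fun i => ⟨2 * (i.val / 2) + (1 - i.val % 2), by omega⟩)
    (by intro i; ext; simp; omega)

/-- A fixed-point-free involution: a permutation of order dividing 2 with no fixed points. -/
def IsFpfInv {α : Type*} (σ : Equiv.Perm α) : Prop :=
  σ ^ 2 = 1 ∧ ∀ x, σ x ≠ x

/-- The subgroup generated by a set `S` of permutations acts transitively. -/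
def GenTransitive {α : Type*} (S : Set (Equiv.Perm α)) : Prop :=
  ∀ x y : α, ∃ g ∈ Subgroup.closure S, g x = y

/-- `vCount d k` is the number of `(d-1)`-tuples `(t₂,…,t_d)` of fixed-point-free
involutions on a set of size `2k` which, together with the standard fixed-point-free
involution, generate a transitive group. -/
noncomputable def vCount (d k : ℕ) : ℕ :=
  Nat.card {t : Fin (d - 1) → Equiv.Perm (Fin (2 * k)) //
    (∀ i, IsFpfInv (t i)) ∧ GenTransitive ({stdInv k} ∪ Set.range t)}

/-!
The orbit `O` of `x₀` under `⟨f, t₁, …⟩` is `f`-invariant, hence a union of `k` of the `n`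
two-point orbits of `f`, one of them containing `x₀`: there are `C(n-1, k-1)` such sets. Every
`tᵢ` preserves `O`, so the tuple splits into its restrictions to `O` and to `Oᶜ`. The restrictions
to `O` are exactly the tuples which, together with `f|O`, act transitively on `O`; since
fixed-point-free involutions on sets of the same size have the same cycle type, `f|O` is conjugate
to `stdInv k` and these are counted by `vCount d k`. The restrictions to `Oᶜ` are arbitrary, and
the cycle type count gives `(2(n-k)-1)!!` fixed-point-free involutions of `Oᶜ`.
-/

open Equiv MulAction

variable {α β : Type*}

lemma isFpfInv_iff {σ : Perm α} : IsFpfInv σ ↔ Function.Involutive σ ∧ ∀ x, σ x ≠ x := by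
  rw [IsFpfInv, sq, Perm.ext_iff]
  rfl

lemma isFpfInv_permCongr_iff (e : α ≃ β) {σ : Perm α} :
    IsFpfInv (e.permCongr σ) ↔ IsFpfInv σ := by
  simp only [isFpfInv_iff, Function.Involutive, permCongr_apply, symm_apply_apply,
    EmbeddingLike.apply_eq_iff_eq, ne_eq, e.symm.forall_congr_left, e.symm_symm]

lemma Equiv.Perm.subtypeCongr_subtypePerm {p : α → Prop} [DecidablePred p] (σ : Perm α)
    (h : ∀ x, p (σ x) ↔ p x) :
    (σ.subtypePerm h).subtypeCongr (σ.subtypePerm fun x => not_congr (h x)) = σ := by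
  ext x
  by_cases hx : p x
  · simp [Perm.subtypeCongr.left_apply _ _ hx]
  · simp [Perm.subtypeCongr.right_apply _ _ hx]

lemma isFpfInv_subtypeCongr_iff {p : α → Prop} [DecidablePred p] {ep : Perm {a // p a}}
    {en : Perm {a // ¬ p a}} :
    IsFpfInv (ep.subtypeCongr en) ↔ IsFpfInv ep ∧ IsFpfInv en := by
  have forall_split (q : α → Prop) :
      (∀ x, q x) ↔ (∀ x : {a // p a}, q x) ∧ ∀ x : {a // ¬ p a}, q x :=
    ⟨fun h => ⟨fun x => h x, fun x => h x⟩,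
      fun h x => if hx : p x then h.1 ⟨x, hx⟩ else h.2 ⟨x, hx⟩⟩
  simp only [isFpfInv_iff, Function.Involutive]
  rw [forall_split, forall_split (fun x => _ ≠ x)]
  simp only [Perm.subtypeCongr.left_apply_subtype, Perm.subtypeCongr.right_apply_subtype, ne_eq,
    Subtype.ext_iff]
  tauto

lemma IsFpfInv.subtypePerm {p : α → Prop} [DecidablePred p] {σ : Perm α} (hσ : IsFpfInv σ)
    (h : ∀ x, p (σ x) ↔ p x) : IsFpfInv (σ.subtypePerm h) := by
  rw [← Perm.subtypeCongr_subtypePerm σ h, isFpfInv_subtypeCongr_iff] at hσ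
  exact hσ.1

lemma stdInv_isFpfInv (n : ℕ) : IsFpfInv (stdInv n) := by
  refine isFpfInv_iff.mpr ⟨Function.Involutive.toPerm_involutive _, fun i h => ?_⟩
  have : 2 * (i.val / 2) + (1 - i.val % 2) = i.val := congrArg Fin.val h
  omega

def boolFlip (β : Type*) : Perm (β × Bool) := (Equiv.refl β).prodCongr Equiv.boolNot

lemma boolFlip_isFpfInv (β : Type*) : IsFpfInv (boolFlip β) :=
  isFpfInv_iff.mpr ⟨fun x => Prod.ext rfl (Bool.not_not x.2),
    fun x => by simp [boolFlip, Prod.ext_iff]⟩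

lemma factorial_two_mul_eq_oddDF (m : ℕ) : (2 * m)! = 2 ^ m * m ! * oddDF m := by
  induction m with
  | zero => rfl
  | succ m ih =>
    rw [show 2 * (m + 1) = 2 * m + 1 + 1 by ring, Nat.factorial_succ, Nat.factorial_succ, ih,
      oddDF, oddDF, Finset.prod_range_succ, Nat.factorial_succ]
    ring

section Fintype

variable [Fintype α] [DecidableEq α]

lemma isFpfInv_iff_cycleType_eq {m : ℕ} (hα : Fintype.card α = 2 * m) {σ : Perm α} :
    IsFpfInv σ ↔ σ.cycleType = Multiset.replicate m 2 := by
  have support_eq_univ : (∀ x, σ x ≠ x) ↔ σ.support.card = 2 * m := by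
    rw [← hα, Finset.card_eq_iff_eq_univ, Finset.eq_univ_iff_forall]
    simp only [Perm.mem_support]
  rw [IsFpfInv, Perm.pow_prime_eq_one_iff, support_eq_univ, ← Perm.sum_cycleType]
  constructor
  · rintro ⟨h2, hsum⟩
    have hcard : Multiset.card σ.cycleType = m := by
      rw [Multiset.eq_replicate_card.mpr h2, Multiset.sum_replicate, smul_eq_mul] at hsum
      omega
    rw [Multiset.eq_replicate_card.mpr h2, hcard]
  · intro h
    simp [h, Multiset.mem_replicate, mul_comm]

lemma card_isFpfInv {m : ℕ} (hα : Fintype.card α = 2 * m) :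
    Nat.card {σ : Perm α // IsFpfInv σ} = oddDF m := by
  classical
  have hcount := Perm.card_of_cycleType (α := α) (Multiset.replicate m 2)
  have hprod : ∏ x ∈ (Multiset.replicate m 2).toFinset,
      (Multiset.count x (Multiset.replicate m 2))! = m ! := by
    rcases Nat.eq_zero_or_pos m with rfl | hm
    · rfl
    · simp [Multiset.toFinset_replicate, hm.ne']
  rw [Nat.card_eq_fintype_card, Fintype.card_subtype]
  simp_rw [isFpfInv_iff_cycleType_eq hα]
  rw [hcount, if_pos (by simp [hα, Multiset.mem_replicate, mul_comm]), hα, hprod,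
    Multiset.sum_replicate, Multiset.prod_replicate, smul_eq_mul, mul_comm m, Nat.sub_self,
    Nat.factorial_zero, one_mul, factorial_two_mul_eq_oddDF,
    Nat.mul_div_cancel_left _ (by positivity)]

end Fintype

lemma exists_permCongr_eq_of_isFpfInv [Fintype α] [DecidableEq α] [Fintype β] [DecidableEq β]
    {m : ℕ} (hα : Fintype.card α = 2 * m) (hβ : Fintype.card β = 2 * m) {σ : Perm α}
    {τ : Perm β} (hσ : IsFpfInv σ) (hτ : IsFpfInv τ) : ∃ e : α ≃ β, e.permCongr σ = τ := by
  let e₀ := Fintype.equivOfCardEq (hα.trans hβ.symm)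
  have hconj : IsConj (e₀.permCongr σ) τ := by
    rw [Perm.isConj_iff_cycleType_eq, (isFpfInv_iff_cycleType_eq hβ).mp hτ,
      ← isFpfInv_iff_cycleType_eq hβ, isFpfInv_permCongr_iff]
    exact hσ
  obtain ⟨c, hc⟩ := isConj_iff.mp hconj
  refine ⟨e₀.trans c, ?_⟩
  rw [← hc]
  ext x
  simp

lemma mem_orbit_closure_iff {S : Set (Perm α)} {x y : α} :
    y ∈ orbit (Subgroup.closure S) x ↔ ∃ g ∈ Subgroup.closure S, g x = y := by
  simp only [mem_orbit_iff, Subtype.exists, Subgroup.mk_smul, Perm.smul_def, exists_prop]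

lemma genTransitive_iff_orbit_eq_univ (S : Set (Perm α)) (x₀ : α) :
    GenTransitive S ↔ orbit (Subgroup.closure S) x₀ = Set.univ := by
  rw [← isPretransitive_iff_orbit_eq_univ, isPretransitive_iff]
  simp only [GenTransitive, ← mem_orbit_iff, mem_orbit_closure_iff]

lemma genTransitive_permCongr_image_iff (e : α ≃ β) (S : Set (Perm α)) :
    GenTransitive (e.permCongr '' S) ↔ GenTransitive S := by
  have hclosure : Subgroup.closure (e.permCongr '' S) =
      (Subgroup.closure S).map e.permCongrHom.toMonoidHom := by
    rw [MonoidHom.map_closure]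
    rfl
  simp only [GenTransitive, hclosure, Subgroup.mem_map, exists_exists_and_eq_and]
  refine e.symm.forall_congr_left.trans (forall_congr' fun x =>
    e.symm.forall_congr_left.trans (forall_congr' fun y => ?_))
  simp

lemma apply_mem_orbit_closure_iff {S : Set (Perm α)} {g : Perm α} (hg : g ∈ Subgroup.closure S)
    {x₀ y : α} : g y ∈ orbit (Subgroup.closure S) x₀ ↔ y ∈ orbit (Subgroup.closure S) x₀ := by
  rw [← orbit_eq_iff, ← orbit_eq_iff, show g y = (⟨g, hg⟩ : Subgroup.closure S) • y from rfl,
    orbit_smul]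

lemma orbit_closure_image_subtypeCongr {p : α → Prop} [DecidablePred p]
    (P : Set (Perm {a // p a} × Perm {a // ¬ p a})) (x : {a // p a}) :
    orbit (Subgroup.closure ((fun q => q.1.subtypeCongr q.2) '' P)) (x : α) =
      Subtype.val '' orbit (Subgroup.closure (Prod.fst '' P)) x := by
  have hglue : Subgroup.closure ((fun q => q.1.subtypeCongr q.2) '' P) =
      (Subgroup.closure P).map (Perm.subtypeCongrHom p) := by
    rw [MonoidHom.map_closure]
    rfl
  have hfst : Subgroup.closure (Prod.fst '' P) = (Subgroup.closure P).map (MonoidHom.fst _ _) := by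
    rw [MonoidHom.map_closure]
    rfl
  ext y
  simp only [mem_orbit_closure_iff, hglue, hfst, Subgroup.mem_map, Set.mem_image,
    exists_exists_and_eq_and]
  simp [Perm.subtypeCongrHom, Perm.subtypeCongr.left_apply_subtype]

def transitiveFpfTuples (ι : Type*) (f : Perm α) : Set (ι → Perm α) :=
  {t | (∀ i, IsFpfInv (t i)) ∧ GenTransitive ({f} ∪ Set.range t)}

lemma card_transitiveFpfTuples_congr (ι : Type*) (e : α ≃ β) (f : Perm α) :
    Nat.card (transitiveFpfTuples ι (e.permCongr f)) = Nat.card (transitiveFpfTuples ι f) := by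
  refine (Nat.card_congr (Equiv.subtypeEquiv (Equiv.piCongrRight fun _ => e.permCongr)
    fun t => ?_)).symm
  have hgens : ({e.permCongr f} ∪ Set.range fun i => e.permCongr (t i)) =
      e.permCongr '' ({f} ∪ Set.range t) := by
    rw [Set.image_union, Set.image_singleton, ← Set.range_comp]
    rfl
  change _ ↔ (∀ i, IsFpfInv (e.permCongr (t i))) ∧
    GenTransitive ({e.permCongr f} ∪ Set.range fun i => e.permCongr (t i))
  rw [hgens, genTransitive_permCongr_image_iff]
  simp only [isFpfInv_permCongr_iff]
  rfl

section Restriction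

variable {ι : Type*} {O : Set α} [DecidablePred (· ∈ O)] {f : Perm α}
  (hf : ∀ x, f x ∈ O ↔ x ∈ O)

lemma orbit_closure_subtypeCongr {x₀ : α} (hx₀ : x₀ ∈ O) (s : ι → Perm O)
    (u : ι → Perm {x // x ∉ O}) :
    orbit (Subgroup.closure ({f} ∪ Set.range fun i => (s i).subtypeCongr (u i))) x₀ =
      Subtype.val '' orbit (Subgroup.closure ({f.subtypePerm hf} ∪ Set.range s)) ⟨x₀, hx₀⟩ := by
  have hgens : ({f} ∪ Set.range fun i => (s i).subtypeCongr (u i)) =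
      (fun q => q.1.subtypeCongr q.2) ''
        ({(f.subtypePerm hf, f.subtypePerm fun x => not_congr (hf x))} ∪
          Set.range fun i => (s i, u i)) := by
    rw [Set.image_union, Set.image_singleton, ← Set.range_comp, Perm.subtypeCongr_subtypePerm]
    rfl
  have hfst : ({f.subtypePerm hf} ∪ Set.range s) = Prod.fst ''
        ({(f.subtypePerm hf, f.subtypePerm fun x => not_congr (hf x))} ∪
          Set.range fun i => (s i, u i)) := by
    rw [Set.image_union, Set.image_singleton, ← Set.range_comp]
    rfl
  rw [hgens, hfst]
  exact orbit_closure_image_subtypeCongr _ ⟨x₀, hx₀⟩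

theorem card_fpfTuples_orbit_eq [Finite ι] {x₀ : α} (hx₀ : x₀ ∈ O) :
    Nat.card {t : ι → Perm α // (∀ i, IsFpfInv (t i)) ∧
        orbit (Subgroup.closure ({f} ∪ Set.range t)) x₀ = O} =
      Nat.card (transitiveFpfTuples ι (f.subtypePerm hf)) *
        Nat.card {σ : Perm {x // x ∉ O} // IsFpfInv σ} ^ Nat.card ι := by
  let glue : (ι → Perm O) × (ι → Perm {x // x ∉ O}) → ι → Perm α :=
    fun p i => (p.1 i).subtypeCongr (p.2 i)
  have glue_injective : Function.Injective glue := fun p q h => by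
    have hi i : (p.1 i, p.2 i) = (q.1 i, q.2 i) :=
      Perm.subtypeCongrHom_injective (· ∈ O) (congrFun h i)
    exact Prod.ext (funext fun i => congrArg Prod.fst (hi i))
      (funext fun i => congrArg Prod.snd (hi i))
  have mem_range_glue (t : ι → Perm α)
      (ht : orbit (Subgroup.closure ({f} ∪ Set.range t)) x₀ = O) : t ∈ Set.range glue := by
    have hpres (i : ι) (x : α) : t i x ∈ O ↔ x ∈ O := by
      rw [← ht]
      exact apply_mem_orbit_closure_iff (Subgroup.subset_closure (Or.inr ⟨i, rfl⟩))
    exact ⟨(fun i => (t i).subtypePerm (hpres i),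
      fun i => (t i).subtypePerm fun x => not_congr (hpres i x)),
      funext fun i => Perm.subtypeCongr_subtypePerm _ (hpres i)⟩
  have glue_iff (p : (ι → Perm O) × (ι → Perm {x // x ∉ O})) :
      ((∀ i, IsFpfInv (glue p i)) ∧
        orbit (Subgroup.closure ({f} ∪ Set.range (glue p))) x₀ = O) ↔
      p.1 ∈ transitiveFpfTuples ι (f.subtypePerm hf) ∧ ∀ i, IsFpfInv (p.2 i) := by
    have val_image_eq_iff (A : Set O) : Subtype.val '' A = O ↔ A = Set.univ := by
      rw [← Set.image_eq_image Subtype.val_injective, Subtype.coe_image_univ]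
    rw [orbit_closure_subtypeCongr hf hx₀, val_image_eq_iff, ← genTransitive_iff_orbit_eq_univ]
    simp only [glue, isFpfInv_subtypeCongr_iff, forall_and, transitiveFpfTuples, Set.mem_ofPred_eq]
    tauto
  calc _ = Nat.card (glue '' {p | p.1 ∈ transitiveFpfTuples ι (f.subtypePerm hf) ∧
          ∀ i, IsFpfInv (p.2 i)}) := by
        refine Nat.card_congr (Equiv.subtypeEquivRight fun t => ⟨fun ht => ?_, ?_⟩)
        · obtain ⟨p, rfl⟩ := mem_range_glue t ht.2
          exact ⟨p, (glue_iff p).mp ht, rfl⟩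
        · rintro ⟨p, hp, rfl⟩
          exact (glue_iff p).mpr hp
    _ = Nat.card (transitiveFpfTuples ι (f.subtypePerm hf) ×
          (ι → {σ : Perm {x // x ∉ O} // IsFpfInv σ})) := by
        rw [Nat.card_image_of_injective glue_injective]
        exact Nat.card_congr (Equiv.subtypeProdEquivProd.trans
          (Equiv.prodCongr (Equiv.refl _) (Equiv.subtypePiEquivPi)))
    _ = _ := by rw [Nat.card_prod, Nat.card_fun]

end Restriction

lemma card_finsets_containing [Fintype β] [DecidableEq β] (q : β) {k : ℕ} (hk : 1 ≤ k) :
    Nat.card {S : Finset β // q ∈ S ∧ S.card = k} = (Fintype.card β - 1).choose (k - 1) := by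
  have e : {S : Finset β // q ∈ S ∧ S.card = k} ≃ (Finset.univ.erase q).powersetCard (k - 1) :=
    { toFun S := ⟨S.1.erase q, Finset.mem_powersetCard.mpr
        ⟨Finset.erase_subset_erase _ (Finset.subset_univ _),
          by rw [Finset.card_erase_of_mem S.2.1, S.2.2]⟩⟩
      invFun T := ⟨insert q T.1, Finset.mem_insert_self _ _, by
        obtain ⟨hsub, hcard⟩ := Finset.mem_powersetCard.mp T.2
        rw [Finset.card_insert_of_notMem fun hq => by simpa using hsub hq, hcard]
        omega⟩
      left_inv S := Subtype.ext (Finset.insert_erase S.2.1)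
      right_inv T := Subtype.ext (Finset.erase_insert fun hq => by
        simpa using Finset.mem_powersetCard.mp T.2 |>.1 hq) }
  rw [Nat.card_congr e, Nat.card_eq_fintype_card, Fintype.card_coe, Finset.card_powersetCard,
    Finset.card_erase_of_mem (Finset.mem_univ _), Finset.card_univ]

lemma card_boolFlip_invariantSets [Fintype β] (x₀ : β × Bool) (k : ℕ) :
    Nat.card {O : Set (β × Bool) // (∀ x, boolFlip β x ∈ O ↔ x ∈ O) ∧ x₀ ∈ O ∧
        O.ncard = 2 * k} = Nat.card {S : Finset β // x₀.1 ∈ S ∧ S.card = k} := by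
  classical
  have ncard_preimage (S : Finset β) : (Prod.fst ⁻¹' (S : Set β) : Set (β × Bool)).ncard =
      2 * S.card := by
    rw [← Set.prod_univ, Set.ncard_prod, Set.ncard_coe_finset, Set.ncard_univ,
      Nat.card_eq_fintype_card, Fintype.card_bool, mul_comm]
  let preimageFst : {S : Finset β // x₀.1 ∈ S ∧ S.card = k} →
      {O : Set (β × Bool) // (∀ x, boolFlip β x ∈ O ↔ x ∈ O) ∧ x₀ ∈ O ∧ O.ncard = 2 * k} :=
    fun S => ⟨Prod.fst ⁻¹' S.1, fun _ => Iff.rfl, S.2.1, by rw [ncard_preimage, S.2.2]⟩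
  refine (Nat.card_eq_of_bijective preimageFst ⟨fun S T h => ?_, fun O => ?_⟩).symm
  · exact Subtype.ext (Finset.coe_injective
      (Set.preimage_injective.mpr Prod.fst_surjective (congrArg Subtype.val h)))
  · obtain ⟨O, hinv, hx₀, hcard⟩ := O
    let S : Finset β := Finset.univ.filter fun q => (q, false) ∈ O
    have hO : Prod.fst ⁻¹' (S : Set β) = O := by
      ext ⟨q, b⟩
      cases b
      · simp [S]
      · simpa [S, boolFlip] using hinv (q, true)
    refine ⟨⟨S, ?_, ?_⟩, Subtype.ext hO⟩
    · rw [← Finset.mem_coe, ← Set.mem_preimage, hO]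
      exact hx₀
    · rw [← hO, ncard_preimage] at hcard
      omega

lemma card_invariantSets_congr (e : α ≃ β) (f : Perm α) (y : β) (m : ℕ) :
    Nat.card {O : Set β // (∀ x, e.permCongr f x ∈ O ↔ x ∈ O) ∧ y ∈ O ∧ O.ncard = m} =
      Nat.card {O : Set α // (∀ x, f x ∈ O ↔ x ∈ O) ∧ e.symm y ∈ O ∧ O.ncard = m} := by
  refine Nat.card_congr (Equiv.subtypeEquiv (Equiv.Set.congr e.symm) fun O => ?_)
  rw [Equiv.Set.congr_apply, Set.ncard_image_of_injective _ e.symm.injective,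
    e.symm.injective.mem_set_image, e.image_symm_eq_preimage]
  simp only [Set.mem_preimage, permCongr_apply, e.symm.forall_congr_left, symm_symm,
    symm_apply_apply]

theorem card_invariantSets_of_isFpfInv [Fintype α] [DecidableEq α] {f : Perm α}
    (hf : IsFpfInv f) {n : ℕ} (hα : Fintype.card α = 2 * n) (x₀ : α) {k : ℕ} (hk : 1 ≤ k) :
    Nat.card {O : Set α // (∀ x, f x ∈ O ↔ x ∈ O) ∧ x₀ ∈ O ∧ O.ncard = 2 * k} =
      (n - 1).choose (k - 1) := by
  -- conjugate `f` to the flip of `Fin n × Bool`, whose invariant sets are products `S ×ˢ univ`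
  obtain ⟨e, rfl⟩ := exists_permCongr_eq_of_isFpfInv (by simp [mul_comm]) hα
    (boolFlip_isFpfInv (Fin n)) hf
  rw [card_invariantSets_congr, card_boolFlip_invariantSets, card_finsets_containing _ hk,
    Fintype.card_fin]

theorem card_fpfTuples_orbit_eq_of_isFpfInv [Fintype α] [DecidableEq α] {f : Perm α}
    (hf : IsFpfInv f) {n : ℕ} (hα : Fintype.card α = 2 * n) (ι : Type*) [Fintype ι] {k : ℕ}
    {O : Set α} (hinv : ∀ x, f x ∈ O ↔ x ∈ O) {x₀ : α} (hx₀ : x₀ ∈ O) (hO : O.ncard = 2 * k) :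
    Nat.card {t : ι → Perm α // (∀ i, IsFpfInv (t i)) ∧
        orbit (Subgroup.closure ({f} ∪ Set.range t)) x₀ = O} =
      oddDF (n - k) ^ Fintype.card ι * Nat.card (transitiveFpfTuples ι (stdInv k)) := by
  classical
  have card_O : Fintype.card O = 2 * k := by
    rw [← Nat.card_eq_fintype_card, Nat.card_coe_set_eq, hO]
  have card_compl : Fintype.card {x // x ∉ O} = 2 * (n - k) := by
    rw [Fintype.card_subtype_compl, card_O, hα]
    omega
  obtain ⟨e, he⟩ := exists_permCongr_eq_of_isFpfInv card_O (Fintype.card_fin _)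
    (hf.subtypePerm hinv) (stdInv_isFpfInv k)
  rw [card_fpfTuples_orbit_eq hinv hx₀, ← he, card_transitiveFpfTuples_congr,
    card_isFpfInv card_compl, Nat.card_eq_fintype_card (α := ι), mul_comm]

theorem card_fpfTuples_orbit_card_eq [Fintype α] [DecidableEq α] {f : Perm α}
    (hf : IsFpfInv f) {n : ℕ} (hα : Fintype.card α = 2 * n) (x₀ : α) (ι : Type*) [Fintype ι]
    {k : ℕ} (hk : 1 ≤ k) :
    Nat.card {t : ι → Perm α // (∀ i, IsFpfInv (t i)) ∧
        Nat.card (orbit (Subgroup.closure ({f} ∪ Set.range t)) x₀) = 2 * k} =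
      (n - 1).choose (k - 1) * oddDF (n - k) ^ Fintype.card ι *
        Nat.card (transitiveFpfTuples ι (stdInv k)) := by
  let InvSet := {O : Set α // (∀ x, f x ∈ O ↔ x ∈ O) ∧ x₀ ∈ O ∧ O.ncard = 2 * k}
  let byOrbit : {t : ι → Perm α // (∀ i, IsFpfInv (t i)) ∧
        Nat.card (orbit (Subgroup.closure ({f} ∪ Set.range t)) x₀) = 2 * k} ≃
      Σ O : InvSet, {t : ι → Perm α // (∀ i, IsFpfInv (t i)) ∧
        orbit (Subgroup.closure ({f} ∪ Set.range t)) x₀ = O} :=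
    { toFun t := ⟨⟨_, fun _ => apply_mem_orbit_closure_iff (Subgroup.subset_closure (Or.inl rfl)),
          mem_orbit_self x₀, by rw [← Nat.card_coe_set_eq, t.2.2]⟩, t.1, t.2.1, rfl⟩
      invFun p := ⟨p.2.1, p.2.2.1, by rw [Nat.card_coe_set_eq, p.2.2.2, p.1.2.2.2]⟩
      left_inv t := rfl
      right_inv := by
        rintro ⟨⟨O, hO⟩, t, ht, horbit⟩
        obtain rfl : _ = O := horbit
        rfl }
  have : Fintype InvSet := Fintype.ofFinite _
  rw [Nat.card_congr byOrbit, Nat.card_sigma]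
  simp_rw [fun O : InvSet => card_fpfTuples_orbit_eq_of_isFpfInv hf hα ι O.2.1 O.2.2.1 O.2.2.2]
  rw [Finset.sum_const, Finset.card_univ, ← Nat.card_eq_fintype_card,
    card_invariantSets_of_isFpfInv hf hα x₀ hk, smul_eq_mul, mul_assoc]

theorem stmt9 (d : ℕ) (n : ℕ) (hn : 2 ≤ n) (k : ℕ) (hk1 : 1 ≤ k) :
    Nat.card {t : Fin (d - 1) → Equiv.Perm (Fin (2 * n)) //
        (∀ i, IsFpfInv (t i)) ∧
          Nat.card (MulAction.orbit
              (Subgroup.closure ({stdInv n} ∪ Set.range t))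
              (⟨0, by omega⟩ : Fin (2 * n))) = 2 * k} =
      (n - 1).choose (k - 1) * oddDF (n - k) ^ (d - 1) * vCount d k := by
  rw [card_fpfTuples_orbit_card_eq (stdInv_isFpfInv n) (Fintype.card_fin _) _ (Fin (d - 1)) hk1,
    Fintype.card_fin]
  rfl
end

section
/- For d ≥ 3, let L_n = ∑_{k=1}^{n-1} C(n-1,k-1) · ((2k-1)!!·(2n-2k-1)!!/(2n-1)!!)^{d-1}. Then L_n = O(1/n) as n → ∞. -/
open Nat Filter

/-! Since `(2m-1)!! = (2m)! / (2^m m!)`, the ratio `(2k-1)!! (2n-2k-1)!! / (2n-1)!!` equals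
`C(n,k) / C(2n,2k)`, which is at most `1 / C(n,k)` because `C(n,k)^2 ≤ C(2n,2k)` (the diagonal
term of Vandermonde's identity). As `d - 1 ≥ 2` and `C(n-1,k-1) ≤ C(n,k)`, the `k`-th summand is
at most `1 / C(n,k)`. Finally `∑_{k=1}^{n-1} 1 / C(n,k) ≤ 4 / n`: the two extreme terms are `1 / n`
and each of the remaining `n - 3` terms is at most `1 / C(n,2)`. -/

open Finset

lemma oddDF_mul_two_pow_mul_factorial (n : ℕ) : oddDF n * (2 ^ n * n !) = (2 * n)! := by
  induction n with
  | zero => simp [oddDF]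
  | succ n ih =>
    rw [oddDF, prod_range_succ, ← oddDF, show 2 * (n + 1) = 2 * n + 1 + 1 by ring,
      factorial_succ, factorial_succ, factorial_succ, ← ih]
    ring

lemma cast_oddDF {K : Type*} [Field K] [CharZero K] (n : ℕ) :
    (oddDF n : K) = (2 * n)! / (2 ^ n * n !) := by
  rw [eq_div_iff (by simp [factorial_ne_zero]), ← oddDF_mul_two_pow_mul_factorial]
  push_cast; ring

lemma oddDF_mul_oddDF_div_oddDF {K : Type*} [Field K] [CharZero K] {n k : ℕ} (h : k ≤ n) :
    (oddDF k * oddDF (n - k) : K) / oddDF n = n.choose k / (2 * n).choose (2 * k) := by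
  have h2 : 2 * n - 2 * k = 2 * (n - k) := by omega
  have hpow : (2 : K) ^ n = 2 ^ k * 2 ^ (n - k) := by rw [← pow_add, Nat.add_sub_cancel' h]
  rw [cast_choose K h, cast_choose K (by omega : 2 * k ≤ 2 * n), h2, cast_oddDF, cast_oddDF,
    cast_oddDF, hpow]
  field_simp

lemma choose_sq_le_choose_two_mul (n k : ℕ) : n.choose k ^ 2 ≤ (2 * n).choose (2 * k) := by
  rw [two_mul n, two_mul k, add_choose_eq, sq]
  exact single_le_sum (f := fun ij : ℕ × ℕ => n.choose ij.1 * n.choose ij.2)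
    (fun _ _ => Nat.zero_le _) (by simp : ((k, k) : ℕ × ℕ) ∈ antidiagonal (k + k))

lemma choose_le_choose_of_le_half {n a b : ℕ} (hab : a ≤ b) (hb : b ≤ n / 2) :
    n.choose a ≤ n.choose b := by
  induction hab using decreasingInduction with
  | self => rfl
  | of_succ k hk ih => exact (choose_le_succ_of_lt_half_left (by omega)).trans ih

lemma choose_two_le_choose {n k : ℕ} (hk : 2 ≤ k) (hkn : k + 2 ≤ n) :
    n.choose 2 ≤ n.choose k := by
  rcases le_or_gt k (n / 2) with h | h
  · exact choose_le_choose_of_le_half hk h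
  · rw [← choose_symm (by omega : k ≤ n)]
    exact choose_le_choose_of_le_half (by omega) (by omega)

lemma sum_inv_choose_le {n : ℕ} (hn : 4 ≤ n) :
    ∑ k ∈ Icc 1 (n - 1), (n.choose k : ℝ)⁻¹ ≤ 4 / n := by
  have hsplit : Icc 1 (n - 1) = insert 1 (insert (n - 1) (Icc 2 (n - 2))) := by
    ext; simp only [mem_Icc, mem_insert]; omega
  have hmiddle : ∑ k ∈ Icc 2 (n - 2), (n.choose k : ℝ)⁻¹ ≤ 2 / n :=
    calc ∑ k ∈ Icc 2 (n - 2), (n.choose k : ℝ)⁻¹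
        ≤ ∑ _k ∈ Icc 2 (n - 2), (n.choose 2 : ℝ)⁻¹ := by
          refine sum_le_sum fun k hk => ?_
          rw [mem_Icc] at hk
          gcongr
          · exact_mod_cast choose_pos (by omega)
          · exact_mod_cast choose_two_le_choose hk.1 (by omega)
      _ ≤ (n - 1) * (n.choose 2 : ℝ)⁻¹ := by
          rw [sum_const, card_Icc, nsmul_eq_mul]
          gcongr
          rw [le_sub_iff_add_le]
          exact_mod_cast (by omega : n - 2 + 1 - 2 + 1 ≤ n)
      _ = 2 / n := by
          have hn1 : (n : ℝ) - 1 ≠ 0 := by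
            rw [sub_ne_zero]; exact_mod_cast (by omega : n ≠ 1)
          rw [cast_choose_two]
          field_simp
  rw [hsplit, sum_insert (by simp only [mem_insert, mem_Icc]; omega),
    sum_insert (by simp only [mem_Icc]; omega), choose_one_right, choose_symm_of_eq_add
    (by omega : n = n - 1 + 1), choose_one_right]
  linarith [show (n : ℝ)⁻¹ + (n : ℝ)⁻¹ + 2 / n = 4 / n by ring]

lemma choose_mul_oddDF_ratio_pow_le {n k e : ℕ} (hk : 1 ≤ k) (hkn : k ≤ n) (he : 2 ≤ e) :
    ((n - 1).choose (k - 1) : ℝ) * ((oddDF k * oddDF (n - k) : ℝ) / oddDF n) ^ e ≤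
      (n.choose k : ℝ)⁻¹ := by
  rw [oddDF_mul_oddDF_div_oddDF hkn]
  set c : ℝ := (n.choose k : ℝ)
  have hc : 1 ≤ c := Nat.one_le_cast.2 (choose_pos hkn)
  have hρ0 : 0 ≤ c / (2 * n).choose (2 * k) := by positivity
  have hρ : c / (2 * n).choose (2 * k) ≤ c⁻¹ := by
    rw [div_le_iff₀ (by exact_mod_cast choose_pos (by omega)), ← div_eq_inv_mul,
      le_div_iff₀ (by positivity), ← sq, ← cast_pow]
    exact_mod_cast choose_sq_le_choose_two_mul n k
  have hprev : ((n - 1).choose (k - 1) : ℝ) ≤ c := by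
    obtain ⟨m, rfl⟩ : ∃ m, n = m + 1 := ⟨n - 1, by omega⟩
    obtain ⟨j, rfl⟩ : ∃ j, k = j + 1 := ⟨k - 1, by omega⟩
    simp only [c, Nat.add_sub_cancel, choose_succ_succ, cast_add, le_add_iff_nonneg_right]
    positivity
  calc ((n - 1).choose (k - 1) : ℝ) * (c / (2 * n).choose (2 * k)) ^ e
      ≤ c * c⁻¹ ^ 2 := by
        gcongr
        exact (pow_le_pow_of_le_one hρ0 (hρ.trans (inv_le_one_of_one_le₀ hc)) he).trans
          (pow_le_pow_left₀ hρ0 hρ 2)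
    _ = c⁻¹ := by field_simp

theorem stmt13 (d : ℕ) (hd : 3 ≤ d) :
    ∃ C : ℝ, ∀ᶠ n : ℕ in atTop,
      ∑ k ∈ Finset.Icc 1 (n - 1),
          ((n - 1).choose (k - 1) : ℝ) *
            (((oddDF k : ℝ) * (oddDF (n - k) : ℝ)) / (oddDF n : ℝ)) ^ (d - 1) ≤
        C / n := by
  refine ⟨4, ?_⟩
  filter_upwards [eventually_ge_atTop 4] with n hn
  calc _ ≤ ∑ k ∈ Icc 1 (n - 1), (n.choose k : ℝ)⁻¹ := by
        refine sum_le_sum fun k hk => ?_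
        rw [mem_Icc] at hk
        exact choose_mul_oddDF_ratio_pow_le hk.1 (by omega) (by omega)
    _ ≤ 4 / n := sum_inv_choose_le hn
end

section
/- Fix d ≥ 3. With u_n(d) and w_n(d) as in the recurrences above, set x_n(d) = w_n(d) − u_n(d). Then x_n(d) ≤ 2^{-n}·((2n-1)!!)^{d-1}·(n!)^{d-1} for all n ≥ 1. -/
open Nat

lemma oddDF_one : oddDF 1 = 1 := rfl

lemma oddDF_succ_mul_oddDF_succ_le (a b : ℕ) :
    oddDF (a + 1) * oddDF (b + 1) ≤ oddDF (a + b + 1) := by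
  induction b with
  | zero => simp [oddDF_one]
  | succ b ih =>
    rw [oddDF_succ (b + 1), show a + (b + 1) + 1 = a + b + 1 + 1 by ring, oddDF_succ (a + b + 1),
      ← mul_assoc]
    exact Nat.mul_le_mul ih (by omega)

lemma choose_mul_oddDF_mul_oddDF_le (k l : ℕ) :
    (k + l + 2).choose (k + 1) * (oddDF (k + 1) * oddDF (l + 1)) ≤
      (k + l + 2) * oddDF (k + l + 1) := by
  induction k generalizing l with
  | zero => simp [oddDF_one]
  | succ k ihk =>
    induction l with
    | zero =>
      rw [show k + 1 + 0 + 2 = k + 2 + 1 by ring, choose_succ_self_right]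
      simp [oddDF_one]
    | succ l ihl =>
      -- Pascal's rule and both hypotheses reduce it to `2 (s+3)^2 ≤ (s+4)(2s+5)` for `s = k + l`.
      have hk := ihk (l + 1)
      rw [show k + 1 + (l + 1) + 2 = (k + l + 3) + 1 by ring, choose_succ_succ',
        show k + 1 + (l + 1) + 1 = (k + l + 2) + 1 by ring, oddDF_succ (k + l + 2)]
      rw [show k + (l + 1) + 2 = k + l + 3 by ring, show k + (l + 1) + 1 = k + l + 2 by ring] at hk
      rw [show k + 1 + l + 2 = k + l + 3 by ring, show k + 1 + l + 1 = k + l + 2 by ring] at ihl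
      rw [oddDF_succ (k + 1)] at ihl ⊢
      rw [oddDF_succ (l + 1)] at hk ⊢
      nlinarith

def recCoeff (d n k : ℕ) : ℕ := (n - 1).choose (k - 1) * (oddDF k * oddDF (n - k)) ^ (d - 1)

lemma recCoeff_one (d n : ℕ) : recCoeff d n 1 = oddDF (n - 1) ^ (d - 1) := by
  simp [recCoeff, oddDF_one]

lemma recCoeff_self (d n : ℕ) : recCoeff d n n = oddDF n ^ (d - 1) := by
  simp [recCoeff, oddDF]

lemma recCoeff_mul_le {d n k : ℕ} (hd : 3 ≤ d) (hk : 1 ≤ k) (hkn : k < n) :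
    recCoeff d n k * (2 * n - 1) ^ 2 ≤ k * oddDF n ^ (d - 1) := by
  obtain ⟨i, rfl⟩ : ∃ i, k = i + 1 := ⟨k - 1, by omega⟩
  obtain ⟨j, rfl⟩ : ∃ j, n = i + j + 2 := ⟨n - i - 2, by omega⟩
  obtain ⟨e, rfl⟩ : ∃ e, d = e + 3 := ⟨d - 3, by omega⟩
  have hc : (i + j + 2) * (i + j + 1).choose i = (i + j + 2).choose (i + 1) * (i + 1) :=
    add_one_mul_choose_eq _ _
  have hmain := choose_mul_oddDF_mul_oddDF_le i j
  have hρ := oddDF_succ_mul_oddDF_succ_le i j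
  simp only [recCoeff, show i + j + 2 - 1 = i + j + 1 by omega, show i + 1 - 1 = i by omega,
    show i + j + 2 - (i + 1) = j + 1 by omega,
    show 2 * (i + j + 2) - 1 = 2 * (i + j + 1) + 1 by omega,
    show e + 3 - 1 = e + 2 by omega, oddDF_succ (i + j + 1)]
  set ρ := oddDF (i + 1) * oddDF (j + 1)
  set Q := oddDF (i + j + 1)
  set m := 2 * (i + j + 1) + 1
  have hpow : (i + j + 2).choose (i + 1) * ρ ^ (e + 2) ≤ (i + j + 2) * Q ^ (e + 2) :=
    calc (i + j + 2).choose (i + 1) * ρ ^ (e + 2)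
        = (i + j + 2).choose (i + 1) * ρ * ρ ^ (e + 1) := by ring
      _ ≤ (i + j + 2) * Q * Q ^ (e + 1) := Nat.mul_le_mul hmain (Nat.pow_le_pow_left hρ _)
      _ = (i + j + 2) * Q ^ (e + 2) := by ring
  have hm : m ^ 2 ≤ m ^ (e + 2) := Nat.pow_le_pow_right (by omega) (by omega)
  clear_value ρ Q m
  refine Nat.le_of_mul_le_mul_left ?_ (show 0 < i + j + 2 by omega)
  calc (i + j + 2) * ((i + j + 1).choose i * ρ ^ (e + 2) * m ^ 2)
      = (i + j + 2) * (i + j + 1).choose i * ρ ^ (e + 2) * m ^ 2 := by ring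
    _ = (i + 1) * ((i + j + 2).choose (i + 1) * ρ ^ (e + 2)) * m ^ 2 := by rw [hc]; ring
    _ ≤ (i + 1) * ((i + j + 2) * Q ^ (e + 2)) * m ^ (e + 2) := by gcongr
    _ = (i + j + 2) * ((i + 1) * (Q * m) ^ (e + 2)) := by ring

lemma four_mul_sum_recCoeff_le {d : ℕ} (hd : 3 ≤ d) (n : ℕ) :
    4 * ∑ k ∈ Finset.Icc 1 (n - 1), recCoeff d n k ≤ oddDF n ^ (d - 1) := by
  rcases n with _ | m
  · simp
  set P := oddDF (m + 1) ^ (d - 1)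
  have hterm : ∀ k ∈ Finset.Icc 1 m, recCoeff d (m + 1) k * (2 * m + 1) ^ 2 ≤ m * P := by
    intro k hk
    rw [Finset.mem_Icc] at hk
    have h := recCoeff_mul_le hd hk.1 (show k < m + 1 by omega)
    rw [show 2 * (m + 1) - 1 = 2 * m + 1 by omega] at h
    exact h.trans (Nat.mul_le_mul_right _ hk.2)
  have hsum := Finset.sum_le_card_nsmul _ _ _ hterm
  rw [← Finset.sum_mul, Nat.card_Icc, smul_eq_mul, Nat.add_sub_cancel] at hsum
  refine Nat.le_of_mul_le_mul_right ?_ (show 0 < (2 * m + 1) ^ 2 by positivity)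
  calc 4 * (∑ k ∈ Finset.Icc 1 (m + 1 - 1), recCoeff d (m + 1) k) * (2 * m + 1) ^ 2
      ≤ 4 * (m * (m * P)) := by rw [Nat.add_sub_cancel, mul_assoc]; exact Nat.mul_le_mul_left _ hsum
    _ ≤ P * (2 * m + 1) ^ 2 := by nlinarith

noncomputable def bound (d n : ℕ) : ℝ :=
  ((2 : ℝ) ^ n)⁻¹ * (oddDF n : ℝ) ^ (d - 1) * (n ! : ℝ) ^ (d - 1)

lemma bound_pos (d n : ℕ) : 0 < bound d n := by
  have := oddDF_pos n
  unfold bound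
  positivity

lemma bound_one (d : ℕ) : bound d 1 = 1 / 2 := by
  simp [bound, oddDF_one]

lemma choose_mul_div_factorial_pow_mul_bound (d n k : ℕ) :
    ((n - 1).choose (k - 1) : ℝ) * ((oddDF (n - k) : ℝ) / (k ! : ℝ)) ^ (d - 1) * 2 ^ k * bound d k =
      recCoeff d n k := by
  have : (k ! : ℝ) ≠ 0 := by positivity
  unfold bound recCoeff
  push_cast
  rw [div_pow, mul_pow]
  field_simp

lemma div_mul_choose_pow_mul_bound_mul_bound {d n k : ℕ} (hd : 1 ≤ d) (hk : 1 ≤ k) (hkn : k ≤ n) :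
    (k : ℝ) / n * (n.choose k : ℝ) ^ d * bound d k * bound d (n - k) =
      ((2 : ℝ) ^ n)⁻¹ * (n ! : ℝ) ^ (d - 1) * recCoeff d n k := by
  obtain ⟨i, rfl⟩ : ∃ i, k = i + 1 := ⟨k - 1, by omega⟩
  obtain ⟨l, rfl⟩ : ∃ l, n = i + 1 + l := ⟨n - i - 1, by omega⟩
  obtain ⟨e, rfl⟩ : ∃ e, d = e + 1 := ⟨d - 1, by omega⟩
  have hc : ((i + l).choose i : ℝ) = (i + 1 + l).choose (i + 1) * (i + 1) / (i + 1 + l : ℕ) := by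
    rw [eq_div_iff (by positivity), show i + 1 + l = i + l + 1 by ring]
    exact_mod_cast (mul_comm _ _).trans (add_one_mul_choose_eq (i + l) i)
  have hf : ((i + 1 + l).choose (i + 1) : ℝ) * (i + 1)! * l ! = (i + 1 + l)! := by
    rw [choose_symm_add]
    exact_mod_cast add_choose_mul_factorial_mul_factorial (i + 1) l
  simp only [bound, recCoeff, show i + 1 + l - 1 = i + l by omega, show i + 1 - 1 = i by omega,
    show i + 1 + l - (i + 1) = l by omega, Nat.add_sub_cancel]
  rw [← hf]
  push_cast [hc, pow_add, pow_succ, mul_pow]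
  field_simp

lemma mem_Icc_bound_of_rec {d : ℕ} (hd : 3 ≤ d) {u : ℕ → ℝ}
    (hurec : ∀ n : ℕ, 1 < n →
      (oddDF (n - 1) : ℝ) ^ (d - 1) +
        ∑ k ∈ Finset.Icc 2 n,
          ((n - 1).choose (k - 1) : ℝ) * ((oddDF (n - k) : ℝ) / (k ! : ℝ)) ^ (d - 1) *
            2 ^ k * u k =
        (oddDF n : ℝ) ^ (d - 1)) :
    ∀ n, 2 ≤ n → u n ∈ Set.Icc 0 (bound d n) := by
  intro n
  induction n using Nat.strong_induction_on with
  | _ n ih =>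
  intro hn
  set c : ℕ → ℝ := fun k ↦
    ((n - 1).choose (k - 1) : ℝ) * ((oddDF (n - k) : ℝ) / (k ! : ℝ)) ^ (d - 1) * 2 ^ k
  have hcb (k : ℕ) : c k * bound d k = recCoeff d n k :=
    choose_mul_div_factorial_pow_mul_bound d n k
  have hcbn : c n * bound d n = (oddDF n : ℝ) ^ (d - 1) := by
    rw [hcb, recCoeff_self, Nat.cast_pow]
  have hcn : 0 < c n := by
    have := oddDF_pos n
    exact pos_of_mul_pos_left (hcbn ▸ by positivity) (bound_pos d n).le
  have hA : 4 * ∑ k ∈ Finset.Icc 1 (n - 1), (recCoeff d n k : ℝ) ≤ (oddDF n : ℝ) ^ (d - 1) := by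
    exact_mod_cast four_mul_sum_recCoeff_le hd n
  set A := ∑ k ∈ Finset.Icc 1 (n - 1), (recCoeff d n k : ℝ)
  have hA1 : (oddDF (n - 1) : ℝ) ^ (d - 1) ≤ A := by
    rw [← Nat.cast_pow, ← recCoeff_one]
    exact Finset.single_le_sum (f := fun k ↦ (recCoeff d n k : ℝ)) (fun _ _ ↦ by positivity)
      (Finset.mem_Icc.2 ⟨le_rfl, by omega⟩)
  set S := ∑ k ∈ Finset.Icc 2 (n - 1), c k * u k
  have hS0 : 0 ≤ S := Finset.sum_nonneg fun k hk ↦ by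
    rw [Finset.mem_Icc] at hk
    exact mul_nonneg (by positivity) (ih k (by omega) hk.1).1
  have hSA : S ≤ A :=
    calc S ≤ ∑ k ∈ Finset.Icc 2 (n - 1), (recCoeff d n k : ℝ) := Finset.sum_le_sum fun k hk ↦ by
          rw [Finset.mem_Icc] at hk
          rw [← hcb]
          exact mul_le_mul_of_nonneg_left (ih k (by omega) hk.1).2 (by positivity)
      _ ≤ A := Finset.sum_le_sum_of_subset_of_nonneg (Finset.Icc_subset_Icc_left (by omega))
          fun _ _ _ ↦ by positivity
  have hrec : (oddDF (n - 1) : ℝ) ^ (d - 1) + (S + c n * u n) = (oddDF n : ℝ) ^ (d - 1) := by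
    have h := hurec n hn
    rwa [← Nat.sub_add_cancel (show 1 ≤ n by omega), Finset.sum_Icc_succ_top (by omega),
      Nat.sub_add_cancel (show 1 ≤ n by omega)] at h
  have hP : 0 ≤ (oddDF (n - 1) : ℝ) ^ (d - 1) := by positivity
  constructor
  · exact nonneg_of_mul_nonneg_right (by linarith) hcn
  · exact le_of_mul_le_mul_left (by linarith) hcn

-- The factor `2` is needed only at `n = 1`, where `u 1 = 2 * bound d 1`.
lemma mem_Icc_two_mul_bound {d : ℕ} {u : ℕ → ℝ} (hu1 : u 1 = 1)
    (hu : ∀ n, 2 ≤ n → u n ∈ Set.Icc 0 (bound d n)) :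
    ∀ n, 1 ≤ n → u n ∈ Set.Icc 0 (2 * bound d n) := by
  intro n hn
  rcases hn.eq_or_lt with rfl | hn
  · simp [hu1, bound_one]
  · have := bound_pos d n
    exact Set.Icc_subset_Icc_right (by linarith) (hu n hn)

lemma sum_convolution_le_bound {d n : ℕ} (hd : 3 ≤ d) {u w : ℕ → ℝ}
    (hu : ∀ k ∈ Finset.Icc 1 (n - 1), u k ∈ Set.Icc 0 (2 * bound d k))
    (hw : ∀ k ∈ Finset.Icc 1 (n - 1), w (n - k) ≤ 2 * bound d (n - k)) :
    ∑ k ∈ Finset.Icc 1 (n - 1), (k : ℝ) / n * (n.choose k : ℝ) ^ d * u k * w (n - k) ≤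
      bound d n := by
  have hA : 4 * ∑ k ∈ Finset.Icc 1 (n - 1), (recCoeff d n k : ℝ) ≤ (oddDF n : ℝ) ^ (d - 1) := by
    exact_mod_cast four_mul_sum_recCoeff_le hd n
  set F : ℝ := ((2 : ℝ) ^ n)⁻¹ * (n ! : ℝ) ^ (d - 1)
  calc ∑ k ∈ Finset.Icc 1 (n - 1), (k : ℝ) / n * (n.choose k : ℝ) ^ d * u k * w (n - k)
      ≤ ∑ k ∈ Finset.Icc 1 (n - 1), 4 * (F * recCoeff d n k) := Finset.sum_le_sum fun k hk ↦ by
        have hk' := Finset.mem_Icc.1 hk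
        have ht : 0 ≤ (k : ℝ) / n * (n.choose k : ℝ) ^ d := by positivity
        have := bound_pos d (n - k)
        calc (k : ℝ) / n * (n.choose k : ℝ) ^ d * u k * w (n - k)
            ≤ (k : ℝ) / n * (n.choose k : ℝ) ^ d * u k * (2 * bound d (n - k)) :=
              mul_le_mul_of_nonneg_left (hw k hk) (mul_nonneg ht (hu k hk).1)
          _ ≤ (k : ℝ) / n * (n.choose k : ℝ) ^ d * (2 * bound d k) * (2 * bound d (n - k)) := by
              gcongr
              exact (hu k hk).2
          _ = 4 * (F * recCoeff d n k) := by
              rw [← div_mul_choose_pow_mul_bound_mul_bound (by omega) hk'.1 (by omega)]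
              ring
    _ = F * (4 * ∑ k ∈ Finset.Icc 1 (n - 1), (recCoeff d n k : ℝ)) := by
        rw [← Finset.mul_sum, ← Finset.mul_sum]
        ring
    _ ≤ F * (oddDF n : ℝ) ^ (d - 1) := by gcongr
    _ = bound d n := by simp only [F, bound]; ring

lemma le_two_mul_bound_of_rec {d : ℕ} (hd : 3 ≤ d) {u w : ℕ → ℝ}
    (hu : ∀ n, 1 ≤ n → u n ∈ Set.Icc 0 (2 * bound d n)) (hu2 : ∀ n, 2 ≤ n → u n ≤ bound d n)
    (hwrec : ∀ n : ℕ, 1 ≤ n →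
      w n = u n + ∑ k ∈ Finset.Icc 1 (n - 1),
        ((k : ℝ) / n) * (n.choose k : ℝ) ^ d * u k * w (n - k)) :
    ∀ n, 1 ≤ n → w n ≤ 2 * bound d n := by
  intro n
  induction n using Nat.strong_induction_on with
  | _ n ih =>
  intro hn
  rcases hn.eq_or_lt with rfl | hn
  · simpa [hwrec 1 le_rfl] using (hu 1 le_rfl).2
  · have hsum := sum_convolution_le_bound hd (fun k hk ↦ hu k (Finset.mem_Icc.1 hk).1)
      fun k hk ↦ ih (n - k) (by grind) (by grind)
    rw [hwrec n hn.le]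
    linarith [hu2 n hn]

theorem stmt16 (d : ℕ) (hd : 3 ≤ d) (u w : ℕ → ℝ) (hu1 : u 1 = 1)
    (hurec : ∀ n : ℕ, 1 < n →
      (oddDF (n - 1) : ℝ) ^ (d - 1) +
        ∑ k ∈ Finset.Icc 2 n,
          ((n - 1).choose (k - 1) : ℝ) * ((oddDF (n - k) : ℝ) / (k ! : ℝ)) ^ (d - 1) *
            2 ^ k * u k =
        (oddDF n : ℝ) ^ (d - 1))
    (hwrec : ∀ n : ℕ, 1 ≤ n →
      w n = u n + ∑ k ∈ Finset.Icc 1 (n - 1),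
        ((k : ℝ) / n) * (n.choose k : ℝ) ^ d * u k * w (n - k)) :
    ∀ n : ℕ, 1 ≤ n →
      w n - u n ≤ ((2 : ℝ) ^ n)⁻¹ * (oddDF n : ℝ) ^ (d - 1) * (n ! : ℝ) ^ (d - 1) := by
  have hu := mem_Icc_bound_of_rec hd hurec
  have hu' := mem_Icc_two_mul_bound hu1 hu
  have hw := le_two_mul_bound_of_rec hd hu' (fun n hn ↦ (hu n hn).2) hwrec
  intro n hn
  rw [hwrec n hn, add_sub_cancel_left]
  exact sum_convolution_le_bound hd (fun k hk ↦ hu' k (Finset.mem_Icc.1 hk).1)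
    fun k hk ↦ hw (n - k) (by grind)
end

section
/- For d ≥ 3 and n ≥ 1, the inequality ∑_{k=1}^{n-1} (k/n)·C(n,k)^{-(d-2)}·(n/((k+1)(n-k+1)))^{(d-1)/2} ≤ (1/2)·(2^{1/2}·n)^{-(d-3)} holds for all sufficiently large n. -/
/-!
For `1 ≤ k ≤ n - 1` we have `C(n,k) ≥ n` and `(k+1)(n-k+1) - 2n = (k-1)(n-k-1) ≥ 0`, so every
summand is at most `n^{-(d-2)} 2^{-(d-1)/2}`. There are `n - 1 < n` summands, and
`n · n^{-(d-2)} 2^{-(d-1)/2} = (1/2)(√2 n)^{-(d-3)}`; the bound in fact holds for every `n ≥ 1`.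
-/

open Nat Filter

theorem Nat.self_le_choose {n k : ℕ} (hk : 1 ≤ k) (hkn : k < n) : n ≤ n.choose k := by
  induction n generalizing k with
  | zero => omega
  | succ n ih =>
    obtain ⟨j, rfl⟩ : ∃ j, k = j + 1 := ⟨k - 1, by omega⟩
    rw [Nat.choose_succ_succ']
    rcases Nat.eq_zero_or_pos j with rfl | hj
    · simp
    · have h₁ : n ≤ n.choose j := ih hj (by omega)
      have h₂ : 0 < n.choose (j + 1) := Nat.choose_pos (by omega)
      omega

section OrderedField

variable {α : Type*} [Field α] [LinearOrder α] [IsStrictOrderedRing α]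

lemma div_mul_sub_add_one_le_half {n k : α} (hk : 1 ≤ k) (hkn : k + 1 ≤ n) :
    n / ((k + 1) * (n - k + 1)) ≤ 1 / 2 := by
  rw [div_le_iff₀ (by nlinarith)]
  nlinarith [mul_nonneg (sub_nonneg.2 hk) (by linarith : (0 : α) ≤ n - k - 1)]

lemma zpow_le_zpow_left_of_nonpos {a b : α} {j : ℤ} (hj : j ≤ 0) (ha : 0 < a) (hab : a ≤ b) :
    b ^ j ≤ a ^ j := by
  simpa only [inv_zpow', neg_neg] using
    zpow_le_zpow_left₀ (neg_nonneg.2 hj) (inv_nonneg.2 (ha.trans_le hab).le) (inv_anti₀ ha hab)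

end OrderedField

lemma one_half_rpow_eq_mul_sqrt_two_zpow (j : ℤ) :
    (1 / 2 : ℝ) ^ (((j : ℝ) + 2) / 2) = 1 / 2 * √2 ^ (-j) := by
  rw [Real.sqrt_eq_rpow, ← Real.rpow_intCast, ← Real.rpow_mul zero_le_two, one_div,
    Real.inv_rpow zero_le_two, ← Real.rpow_neg zero_le_two,
    ← Real.rpow_neg_one 2, ← Real.rpow_add two_pos]
  congr 1
  push_cast
  ring

lemma choose_summand_le {n k : ℕ} (hk : 1 ≤ k) (hkn : k < n) {j : ℤ} (hj : j ≤ 0) {e : ℝ}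
    (he : 0 ≤ e) :
    ((k : ℝ) / n) * (n.choose k : ℝ) ^ j * ((n : ℝ) / ((k + 1) * (n - k + 1))) ^ e ≤
      (n : ℝ) ^ j * (1 / 2) ^ e := by
  have hn : (0 : ℝ) < n := by exact_mod_cast Nat.zero_lt_of_lt hkn
  have hk' : (1 : ℝ) ≤ k := by exact_mod_cast hk
  have hkn' : (k : ℝ) + 1 ≤ n := by exact_mod_cast hkn
  have hfrac : (k : ℝ) / n ≤ 1 := (div_le_one hn).2 (by linarith)
  have hchoose : (n.choose k : ℝ) ^ j ≤ (n : ℝ) ^ j :=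
    zpow_le_zpow_left_of_nonpos hj hn (by exact_mod_cast Nat.self_le_choose hk hkn)
  have hratio_nonneg : 0 ≤ (n : ℝ) / ((k + 1) * (n - k + 1)) := div_nonneg hn.le (by nlinarith)
  have hratio : ((n : ℝ) / ((k + 1) * (n - k + 1))) ^ e ≤ (1 / 2) ^ e :=
    Real.rpow_le_rpow hratio_nonneg (div_mul_sub_add_one_le_half hk' hkn') he
  calc ((k : ℝ) / n) * (n.choose k : ℝ) ^ j * ((n : ℝ) / ((k + 1) * (n - k + 1))) ^ e
      ≤ 1 * (n : ℝ) ^ j * (1 / 2) ^ e := by gcongr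
    _ = (n : ℝ) ^ j * (1 / 2) ^ e := by rw [one_mul]

theorem stmt17 (d : ℕ) (hd : 3 ≤ d) :
    ∀ᶠ n : ℕ in atTop,
      ∑ k ∈ Finset.Icc 1 (n - 1),
          ((k : ℝ) / n) * ((n.choose k : ℝ)) ^ (-((d : ℤ) - 2)) *
            ((n : ℝ) / (((k : ℝ) + 1) * ((n : ℝ) - k + 1))) ^ (((d : ℝ) - 1) / 2) ≤
        (1 / 2) * (Real.sqrt 2 * n) ^ (-((d : ℤ) - 3)) := by
  filter_upwards [eventually_ge_atTop 1] with n hn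
  have hn₀ : (n : ℝ) ≠ 0 := by positivity
  have he₀ : 0 ≤ ((d : ℝ) - 1) / 2 := by
    have : (3 : ℝ) ≤ d := by exact_mod_cast hd
    linarith
  have he : ((d : ℝ) - 1) / 2 = (((d : ℤ) - 3 : ℤ) + 2) / 2 := by push_cast; ring
  have hpow : (n : ℝ) * n ^ (-((d : ℤ) - 2)) = n ^ (-((d : ℤ) - 3)) := by
    rw [← zpow_one_add₀ hn₀]
    ring_nf
  calc _ ≤ ∑ _k ∈ Finset.Icc 1 (n - 1),
          (n : ℝ) ^ (-((d : ℤ) - 2)) * (1 / 2) ^ (((d : ℝ) - 1) / 2) := by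
        refine Finset.sum_le_sum fun k hk => ?_
        obtain ⟨hk₁, hkn⟩ := Finset.mem_Icc.1 hk
        exact choose_summand_le hk₁ (by omega) (by omega) he₀
    _ = ((n - 1 : ℕ) : ℝ) * ((n : ℝ) ^ (-((d : ℤ) - 2)) * (1 / 2) ^ (((d : ℝ) - 1) / 2)) := by
        simp
    _ ≤ n * ((n : ℝ) ^ (-((d : ℤ) - 2)) * (1 / 2) ^ (((d : ℝ) - 1) / 2)) := by
        gcongr
        omega
    _ = (1 / 2) * (√2 * n) ^ (-((d : ℤ) - 3)) := by
        rw [← mul_assoc, hpow, he, one_half_rpow_eq_mul_sqrt_two_zpow, mul_zpow]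
        ring
end
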